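/- For fixed vectors v⃗, w⃗ ∈ ℝ³, the gradient with respect to the 4-vector 𝐪 of the scalar vᵀ R(𝐪) w, where R(𝐪) = E(𝐪)G(𝐪)ᵀ, equals 2 Δ[v⃗,w⃗] 𝐪, where Δ[v⃗,w⃗] is the symmetric 4×4 matrix with block form [[w⃗·v⃗, (w⃗×v⃗)ᵀ],[w⃗×v⃗, w⃗v⃗ᵀ + v⃗w⃗ᵀ − (w⃗·v⃗)I₃]]. -/

import Mathlib

open Matrix

/-- The 3×4 matrix E built from the components of a coordinate 4-vector. -/
def Emat4 (q : Fin 4 → ℝ) : Matrix (Fin 3) (Fin 4) ℝ :=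
  !![-q 1, q 0, -q 3, q 2;
     -q 2, q 3, q 0, -q 1;
     -q 3, -q 2, q 1, q 0]

/-- The 3×4 matrix G built from the components of a coordinate 4-vector. -/
def Gmat4 (q : Fin 4 → ℝ) : Matrix (Fin 3) (Fin 4) ℝ :=
  !![-q 1, q 0, q 3, -q 2;
     -q 2, -q 3, q 0, q 1;
     -q 3, q 2, -q 1, q 0]

/-- The symmetric 4×4 matrix Δ[v,w] with block form
    [[w·v, (w×v)ᵀ], [w×v, wvᵀ + vwᵀ − (w·v)I₃]]. -/
def Delta (v w : Fin 3 → ℝ) : Matrix (Fin 4) (Fin 4) ℝ :=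
  !![w ⬝ᵥ v, crossProduct w v 0, crossProduct w v 1, crossProduct w v 2;
     crossProduct w v 0, w 0 * v 0 + v 0 * w 0 - w ⬝ᵥ v,
       w 0 * v 1 + v 0 * w 1, w 0 * v 2 + v 0 * w 2;
     crossProduct w v 1, w 1 * v 0 + v 1 * w 0,
       w 1 * v 1 + v 1 * w 1 - w ⬝ᵥ v, w 1 * v 2 + v 1 * w 2;
     crossProduct w v 2, w 2 * v 0 + v 2 * w 0,
       w 2 * v 1 + v 2 * w 1, w 2 * v 2 + v 2 * w 2 - w ⬝ᵥ v]

/-! The scalar vᵀ E(q) G(q)ᵀ w is the quadratic form qᵀ Δ[v,w] q (expand and compare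
coefficients). The differential of a quadratic form p ↦ pᵀ M p at q is h ↦ qᵀ M h + hᵀ M q, so its
gradient is (M + Mᵀ) q, which is 2 Δ q because Δ is symmetric. -/

theorem fderiv_dotProduct_mulVec_self {𝕜 n : Type*} [NontriviallyNormedField 𝕜] [CompleteSpace 𝕜]
    [Fintype n] (M : Matrix n n 𝕜) (q h : n → 𝕜) :
    fderiv 𝕜 (fun p => p ⬝ᵥ (M *ᵥ p)) q h = q ⬝ᵥ (M *ᵥ h) + h ⬝ᵥ (M *ᵥ q) := by
  classical
  let B : (n → 𝕜) →L[𝕜] (n → 𝕜) →L[𝕜] 𝕜 :=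
    LinearMap.toContinuousBilinearMap (toLinearMap₂' 𝕜 M)
  have hB : HasFDerivAt (fun p => B p p) _ q :=
    B.hasFDerivAt_of_bilinear (hasFDerivAt_id q) (hasFDerivAt_id q)
  simpa [B, toLinearMap₂'_apply'] using congrArg (· h) hB.fderiv

theorem Matrix.IsSymm.fderiv_dotProduct_mulVec_self_single {𝕜 n : Type*}
    [NontriviallyNormedField 𝕜] [CompleteSpace 𝕜] [Fintype n] [DecidableEq n]
    {M : Matrix n n 𝕜} (hM : M.IsSymm) (q : n → 𝕜) :
    (fun i => fderiv 𝕜 (fun p => p ⬝ᵥ (M *ᵥ p)) q (Pi.single i 1)) = (2 : 𝕜) • (M *ᵥ q) := by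
  funext i
  have hvecMul : q ᵥ* M = M *ᵥ q := by rw [← vecMul_transpose, hM.eq]
  rw [fderiv_dotProduct_mulVec_self, mulVec_single_one, single_one_dotProduct, Pi.smul_apply,
    two_smul, ← hvecMul]
  rfl

theorem Delta_isSymm (v w : Fin 3 → ℝ) : (Delta v w).IsSymm := by
  ext i j
  fin_cases i <;> fin_cases j <;>
    simp only [Delta, transpose_apply, of_apply, cons_val', cons_val, cons_val_zero, cons_val_one,
      cons_val_fin_one, Fin.isValue, Fin.reduceFinMk, Fin.zero_eta, Fin.mk_one] <;> ring

theorem dotProduct_Emat4_mul_Gmat4_transpose_mulVec (v w : Fin 3 → ℝ) (p : Fin 4 → ℝ) :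
    v ⬝ᵥ ((Emat4 p * (Gmat4 p)ᵀ) *ᵥ w) = p ⬝ᵥ (Delta v w *ᵥ p) := by
  simp only [Emat4, Gmat4, Delta, crossProduct, dotProduct, mulVec, mul_apply, transpose_apply,
    of_apply, cons_val', cons_val, cons_val_zero, cons_val_one, cons_val_fin_one, Fin.isValue,
    Fin.sum_univ_three, Fin.sum_univ_four, LinearMap.mk₂_apply]
  ring

theorem grad_quadratic_form_single_R (v w : Fin 3 → ℝ) (q : Fin 4 → ℝ) :
    (fun i => fderiv ℝ (fun p : Fin 4 → ℝ =>
        v ⬝ᵥ ((Emat4 p * (Gmat4 p)ᵀ) *ᵥ w)) q (Pi.single i 1)) =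
      (2 : ℝ) • (Delta v w *ᵥ q) := by
  simp_rw [dotProduct_Emat4_mul_Gmat4_transpose_mulVec]
  exact (Delta_isSymm v w).fderiv_dotProduct_mulVec_self_single q
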